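/- Let F be a field, fix an admissible order ≺ on the monomials of F[x₁,…,xₙ], let 𝒫 be a set of polynomials and let S be a 𝒫-support. Then for all monomials m and m′ such that m′ appears with nonzero coefficient in the reduction R_{⟨S(m)⟩}(m) of m modulo the ideal generated by S(m), it holds that S(m′) ⊆ S(m) and, for every variable x, S(x·m′) ⊆ S(x·m). -/

import Mathlib

/-- An admissible order on the monomials (exponent vectors) of a polynomial ring:
a total well-order in which `1` (the zero exponent vector) is smallest and which
respects multiplication (addition of exponent vectors). -/
structure AdmissibleOrder (σ : Type*) where
  lt : (σ →₀ ℕ) → (σ →₀ ℕ) → Prop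
  trans : ∀ {a b c}, lt a b → lt b c → lt a c
  irrefl : ∀ a, ¬ lt a a
  total : ∀ a b, a = b ∨ lt a b ∨ lt b a
  wf : WellFounded lt
  zero_lt : ∀ m, m ≠ 0 → lt 0 m
  add_lt : ∀ (m : σ →₀ ℕ) {m₁ m₂}, lt m₁ m₂ → lt (m + m₁) (m + m₂)

/-- `μ` is the leading monomial of `p`. -/
def IsLeadingMonomial {σ F : Type*} [CommSemiring F] (O : AdmissibleOrder σ)
    (p : MvPolynomial σ F) (μ : σ →₀ ℕ) : Prop :=
  μ ∈ p.support ∧ ∀ ν ∈ p.support, ν ≠ μ → O.lt ν μ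

/-- A monomial `μ` is reducible modulo an ideal `I` if it is the leading monomial of
some polynomial of `I`. -/
def Reducible {σ F : Type*} [CommSemiring F] (O : AdmissibleOrder σ)
    (I : Ideal (MvPolynomial σ F)) (μ : σ →₀ ℕ) : Prop :=
  ∃ p ∈ I, IsLeadingMonomial O p μ

/-- The total degree of a monomial (exponent vector). -/
def monDeg {σ : Type*} (m : σ →₀ ℕ) : ℕ := m.sum fun _ e => e

/-- A `P`-support: a map `S` from sets of variables to subsets of `P`; `S` is applied
to a monomial `m` via its set of variables `m.support`. -/
structure IsSupport {σ F : Type*} [CommSemiring F] [DecidableEq σ]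
    (O : AdmissibleOrder σ) (P : Set (MvPolynomial σ F))
    (S : Finset σ → Set (MvPolynomial σ F)) : Prop where
  subset_ambient : ∀ Y, S Y ⊆ P
  prop1 : ∀ (x : σ) (m m' : σ →₀ ℕ), O.lt m' m → S m'.support ⊆ S m.support →
    S (m' + Finsupp.single x 1).support ⊆ S (m + Finsupp.single x 1).support
  prop2 : ∀ (m m' : σ →₀ ℕ), O.lt m' m →
    ((m'.support : Set σ) ⊆ ⋃ p ∈ S m.support, (p.vars : Set σ)) →
    S m'.support ⊆ S m.support
  prop3 : ∀ p ∈ P, ∀ μ : σ →₀ ℕ, IsLeadingMonomial O p μ → p ∈ S μ.support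


/-- `r` is the reduction of `P` modulo `I`: `P - r ∈ I` and every monomial of `r`
is irreducible modulo `I`. -/
def IsReduction {σ F : Type*} [CommRing F] (O : AdmissibleOrder σ)
    (I : Ideal (MvPolynomial σ F)) (P r : MvPolynomial σ F) : Prop :=
  P - r ∈ I ∧ ∀ μ ∈ r.support, ¬ Reducible O I μ

/-! The generators of `⟨S(m)⟩` involve only the variables `V = vars(S(m))`, so for every
variable `x_j ∉ V` this ideal is homogeneous for the `x_j`-degree, and so is the reduction of the
monomial `m`: each of its monomials `m'` is `μ * t` with `vars(μ) ⊆ V` and `t` the `V`-free part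
of `m`. Moreover `m' ≺ m` when `m' ≠ m`, because the leading monomial of `m - R(m) ∈ ⟨S(m)⟩` is
reducible, hence is `m`. Property (2) gives `S(μ) ⊆ S(m)`; property (1), applied once for each
variable of `t`, lifts this to `S(μ t) ⊆ S(m t) = S(m)`, and once more to
`S(x μ t) ⊆ S(x m t) = S(x m)`. -/

open MvPolynomial

namespace AdmissibleOrder

variable {σ : Type*} (O : AdmissibleOrder σ)

theorem exists_max (s : Finset (σ →₀ ℕ)) (hs : s.Nonempty) :
    ∃ ν ∈ s, ∀ μ ∈ s, μ ≠ ν → O.lt μ ν := by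
  let gt : s → s → Prop := fun a b => O.lt b a
  have : IsTrans s gt := ⟨fun _ _ _ hab hbc => O.trans hbc hab⟩
  have : Std.Irrefl gt := ⟨fun a => O.irrefl a⟩
  obtain ⟨⟨ν, hν⟩, -, hmax⟩ := (Finite.wellFounded_of_trans_of_irrefl gt).has_min Set.univ
    ⟨⟨_, hs.choose_spec⟩, trivial⟩
  refine ⟨ν, hν, fun μ hμ hne => ?_⟩
  rcases O.total μ ν with h | h | h
  · exact absurd h hne
  · exact h
  · exact absurd h (hmax ⟨μ, hμ⟩ trivial)

theorem lt_of_add_lt {a b c : σ →₀ ℕ} (h : O.lt (a + b) c) : O.lt a c := by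
  rcases eq_or_ne b 0 with rfl | hb
  · simpa using h
  · exact O.trans (by simpa using O.add_lt a (O.zero_lt b hb)) h

end AdmissibleOrder

theorem exists_isLeadingMonomial {σ F : Type*} [CommSemiring F] (O : AdmissibleOrder σ)
    {p : MvPolynomial σ F} (hp : p ≠ 0) : ∃ μ, IsLeadingMonomial O p μ :=
  O.exists_max p.support (support_nonempty.mpr hp)

namespace MvPolynomial

variable {σ F : Type*} [CommRing F]

theorem eq_or_mem_support_of_mem_support_monomial_sub {m μ : σ →₀ ℕ} {r : MvPolynomial σ F}
    (hμ : μ ∈ (monomial m (1 : F) - r).support) : μ = m ∨ μ ∈ r.support := by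
  classical
  rw [mem_support_iff, coeff_sub, coeff_monomial] at hμ
  by_cases h : m = μ
  · exact Or.inl h.symm
  · rw [if_neg h, zero_sub, neg_ne_zero] at hμ
    exact Or.inr (mem_support_iff.mpr hμ)

theorem mem_support_monomial_sub_of_ne {m m' : σ →₀ ℕ} {r : MvPolynomial σ F}
    (hm' : m' ∈ r.support) (hne : m' ≠ m) : m' ∈ (monomial m 1 - r).support := by
  classical
  rw [mem_support_iff, coeff_sub, coeff_monomial, if_neg (Ne.symm hne), zero_sub, neg_ne_zero]
  exact mem_support_iff.mp hm'

theorem weightedHomogeneousComponent_mem_span {M : Type*} [AddCommMonoid M] [DecidableEq M]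
    {w : σ → M} {G : Set (MvPolynomial σ F)} (hG : ∀ g ∈ G, ∃ d, IsWeightedHomogeneous w g d)
    {q : MvPolynomial σ F} (hq : q ∈ Ideal.span G) (d : M) :
    weightedHomogeneousComponent w d q ∈ Ideal.span G := by
  let _ := weightedGradedAlgebra F w
  refine weightedHomogeneousComponent_mem_of_mem F w
    (Ideal.homogeneous_span _ G fun g hg => ?_) hq d
  obtain ⟨d, hd⟩ := hG g hg
  exact ⟨d, (mem_weightedHomogeneousSubmodule F w d g).mpr hd⟩

end MvPolynomial

namespace IsReduction

variable {σ F : Type*} [CommRing F] {O : AdmissibleOrder σ} {I : Ideal (MvPolynomial σ F)}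
  {m m' : σ →₀ ℕ} {r : MvPolynomial σ F}

theorem isLeadingMonomial_of_mem (hr : IsReduction O I (monomial m 1) r)
    {q : MvPolynomial σ F} (hq : q ∈ I) (hq0 : q ≠ 0)
    (hsupp : ∀ μ ∈ q.support, μ = m ∨ μ ∈ r.support) : IsLeadingMonomial O q m := by
  obtain ⟨μ, hμ⟩ := exists_isLeadingMonomial O hq0
  obtain rfl : μ = m := (hsupp μ hμ.1).resolve_right fun h => hr.2 μ h ⟨q, hq, hμ⟩
  exact hμ

theorem lt_of_mem_support (hr : IsReduction O I (monomial m 1) r) (hm' : m' ∈ r.support)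
    (hne : m' ≠ m) : O.lt m' m := by
  have hq := mem_support_monomial_sub_of_ne hm' hne
  exact (hr.isLeadingMonomial_of_mem hr.1 (support_nonempty.mp ⟨_, hq⟩)
    fun _ => eq_or_mem_support_of_mem_support_monomial_sub).2 m' hq hne

theorem weight_eq_of_mem_support {M : Type*} [AddCommMonoid M] {w : σ → M}
    {G : Set (MvPolynomial σ F)} (hG : ∀ g ∈ G, ∃ d, IsWeightedHomogeneous w g d)
    (hr : IsReduction O (Ideal.span G) (monomial m 1) r) (hm' : m' ∈ r.support) :
    Finsupp.weight w m' = Finsupp.weight w m := by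
  classical
  rcases eq_or_ne m' m with rfl | hne
  · rfl
  set q := weightedHomogeneousComponent w (Finsupp.weight w m') (monomial m 1 - r)
  have hsupp : ∀ μ, μ ∈ q.support ↔
      μ ∈ (monomial m 1 - r).support ∧ Finsupp.weight w μ = Finsupp.weight w m' := by
    intro μ
    rw [support_weightedHomogeneousComponent, Finset.mem_filter]
  have hm'q : m' ∈ q.support := (hsupp m').mpr ⟨mem_support_monomial_sub_of_ne hm' hne, rfl⟩
  have hlead := hr.isLeadingMonomial_of_mem
    (weightedHomogeneousComponent_mem_span hG hr.1 _) (support_nonempty.mp ⟨_, hm'q⟩)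
    fun μ hμ => eq_or_mem_support_of_mem_support_monomial_sub ((hsupp μ).mp hμ).1
  exact ((hsupp m).mp hlead.1).2.symm

theorem apply_eq_of_notMem_vars {G : Set (MvPolynomial σ F)} {j : σ}
    (hj : ∀ g ∈ G, j ∉ g.vars) (hr : IsReduction O (Ideal.span G) (monomial m 1) r)
    (hm' : m' ∈ r.support) : m' j = m j := by
  classical
  have hG : ∀ g ∈ G, IsWeightedHomogeneous (Pi.single j 1 : σ → ℕ) g 0 := by
    intro g hg d hd
    rw [Finsupp.weight_single_one_apply, ← Finsupp.notMem_support_iff]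
    exact fun hjd => hj g hg ((mem_vars_iff_mem_support j).mpr ⟨d, mem_support_iff.mpr hd, hjd⟩)
  simpa only [Finsupp.weight_single_one_apply] using
    hr.weight_eq_of_mem_support (fun g hg => ⟨0, hG g hg⟩) hm'

end IsReduction

namespace IsSupport

variable {σ F : Type*} [CommSemiring F] [DecidableEq σ] {O : AdmissibleOrder σ}
  {P : Set (MvPolynomial σ F)} {S : Finset σ → Set (MvPolynomial σ F)}

theorem subset_add (hS : IsSupport O P S) {a b : σ →₀ ℕ} (hab : O.lt a b)
    (hsub : S a.support ⊆ S b.support) (c : σ →₀ ℕ) :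
    S (a + c).support ⊆ S (b + c).support := by
  obtain ⟨s, rfl⟩ : ∃ s, Multiset.toFinsupp s = c := ⟨_, Finsupp.toMultiset_toFinsupp c⟩
  induction s using Multiset.induction with
  | empty => simpa using hsub
  | cons x s ih =>
    have hlt : O.lt (a + Multiset.toFinsupp s) (b + Multiset.toFinsupp s) := by
      simpa only [add_comm] using O.add_lt (Multiset.toFinsupp s) hab
    have key := hS.prop1 x _ _ hlt ih
    rwa [← Multiset.singleton_add, Multiset.toFinsupp_add, Multiset.toFinsupp_singleton,
      add_comm (Finsupp.single x 1), ← add_assoc, ← add_assoc]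

theorem subset_of_lt_of_subset_vars (hS : IsSupport O P S) {μ m t : σ →₀ ℕ} (hμ : O.lt μ m)
    (hvars : (μ.support : Set σ) ⊆ ⋃ p ∈ S m.support, (p.vars : Set σ))
    (ht : t.support ⊆ m.support) :
    S (μ + t).support ⊆ S m.support ∧
      ∀ x : σ, S (μ + t + Finsupp.single x 1).support ⊆ S (m + Finsupp.single x 1).support := by
  have hsupp : ∀ u : σ →₀ ℕ, (m + t + u).support = (m + u).support := by
    intro u
    rw [add_right_comm, Finsupp.support_add_eq_union, Finset.union_eq_left]
    exact ht.trans (Finsupp.support_mono le_self_add)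
  have hsub := hS.subset_add hμ (hS.prop2 m μ hμ hvars) t
  have hlt : O.lt (μ + t) (m + t) := by simpa only [add_comm t] using O.add_lt t hμ
  refine ⟨?_, fun x => hsupp _ ▸ hS.prop1 x _ _ hlt hsub⟩
  rwa [← add_zero m, ← hsupp 0, add_zero]

end IsSupport

/-- if `m'` appears with nonzero coefficient in the reduction of `m`
modulo the ideal generated by `S(m)`, then `S(m') ⊆ S(m)` and, for every variable `x`,
`S(x·m') ⊆ S(x·m)`. -/
theorem stmt_11 {F : Type*} [Field F] {n : ℕ} (O : AdmissibleOrder (Fin n))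
    (P : Set (MvPolynomial (Fin n) F))
    (S : Finset (Fin n) → Set (MvPolynomial (Fin n) F)) (hS : IsSupport O P S)
    (m m' : Fin n →₀ ℕ) (r : MvPolynomial (Fin n) F)
    (hr : IsReduction O (Ideal.span (S m.support)) (MvPolynomial.monomial m 1) r)
    (hm' : m' ∈ r.support) :
    S m'.support ⊆ S m.support ∧
      ∀ x : Fin n, S (m' + Finsupp.single x 1).support ⊆
        S (m + Finsupp.single x 1).support := by
  classical
  rcases eq_or_ne m' m with rfl | hne
  · exact ⟨subset_rfl, fun _ => subset_rfl⟩
  set V := ⋃ p ∈ S m.support, (p.vars : Set (Fin n))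
  have hout : ∀ j ∉ V, m' j = m j := fun j hj =>
    hr.apply_eq_of_notMem_vars (fun g hg hjg => hj (Set.mem_biUnion hg hjg)) hm'
  have hsplit : m' = m'.filter (· ∈ V) + m.filter (· ∉ V) := by
    ext j
    by_cases hj : j ∈ V <;> simp [hj, hout]
  have hμ : O.lt (m'.filter (· ∈ V)) m :=
    O.lt_of_add_lt (hsplit ▸ hr.lt_of_mem_support hm' hne)
  rw [hsplit]
  exact hS.subset_of_lt_of_subset_vars hμ
    (fun j hj => (Finset.mem_filter.mp hj).2) (Finset.filter_subset _ _)
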